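/- arXiv:1805.06568 — 2 statements merged into one kernel-verified Lean document; each statement's English description precedes it below -/
import Mathlib

section
/- For every nonnegative integer k, 4((k+1)!)^2/(π ((1/2)_{k+1})^2) = 4k + 5 + (k+1)! · ∑_{n=1}^∞ ((1/2)_n)^2/((n+1)!(k+n+1)!). -/
/-!
Write `T k n = (k+1)! (1/2)_{n+1}² / ((n+2)! (k+n+2)!)`. For `k = 0` the series telescopes
(Gosper): `T 0 n = g n - g (n+1)` with `g n = -4 (4n+5) ((1/2)_{n+1}/(n+1)!)²`, and Wallis'
product gives `n ((1/2)_n/n!)² → 1/π`, hence `∑ₙ T 0 n = 16/π - 5`.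

For general `k` the contiguous relation
`4(k+2)² T k n - (2k+3)² T (k+1) n = h n - h (n+1)`, with `h n = 4(k+2)(n+2) T k n → 0`,
telescopes to `h 0 = 1`. So `4(k+2)² ∑ₙ T k n - (2k+3)² ∑ₙ T (k+1) n = 1`, a recurrence
that the closed form also satisfies; induction on `k` concludes.
-/

open Real

noncomputable def rising (x : ℝ) (n : ℕ) : ℝ := ∏ i ∈ Finset.range n, (x + i)

open Filter Topology Nat

lemma rising_succ (x : ℝ) (n : ℕ) : rising x (n + 1) = rising x n * (x + n) :=
  Finset.prod_range_succ _ _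

lemma rising_pos {x : ℝ} (hx : 0 < x) (n : ℕ) : 0 < rising x n :=
  Finset.prod_pos fun i _ => by positivity

lemma wallis_W_mul_sq_rising_half_div_factorial (n : ℕ) :
    Wallis.W n * ((2 * n + 1) * (rising (1/2) n / n !) ^ 2) = 1 := by
  induction n with
  | zero => simp [Wallis.W, rising]
  | succ n ih =>
    calc _ = Wallis.W n * ((2 * n + 1) * (rising (1/2) n / n !) ^ 2) := by
          rw [Wallis.W_succ, rising_succ, factorial_succ]
          push_cast
          field_simp
          ring
      _ = 1 := ih

lemma tendsto_affine_mul_sq_rising_half_div_factorial (a b : ℝ) :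
    Tendsto (fun n : ℕ => (a * n + b) * (rising (1/2) n / n !) ^ 2) atTop (𝓝 (a / π)) := by
  have hy : Tendsto (fun n : ℕ => (2 * n + 1) * (rising (1/2) n / n !) ^ 2) atTop
      (𝓝 (2 / π)) := by
    have hW := Wallis.tendsto_W_nhds_pi_div_two.inv₀ (by positivity)
    rw [inv_div] at hW
    exact hW.congr fun n =>
      (eq_inv_of_mul_eq_one_right (wallis_W_mul_sq_rising_half_div_factorial n)).symm
  have hx : Tendsto (fun n : ℕ => (rising (1/2) n / n !) ^ 2) atTop (𝓝 0) := by
    refine (hy.div_atTop (tendsto_atTop_add_const_right _ 1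
      (tendsto_natCast_atTop_atTop.const_mul_atTop two_pos))).congr fun n => ?_
    field_simp
  convert (hy.const_mul (a / 2)).add (hx.const_mul (b - a / 2)) using 1
  · ext n; ring
  · congr 1; ring

lemma hasSum_sub_succ_of_nonneg {g : ℕ → ℝ} {L : ℝ} (hg : Tendsto g atTop (𝓝 L))
    (h : ∀ n, 0 ≤ g n - g (n + 1)) : HasSum (fun n => g n - g (n + 1)) (g 0 - L) := by
  rw [hasSum_iff_tendsto_nat_of_nonneg h]
  simpa only [Finset.sum_range_sub'] using tendsto_const_nhds.sub hg

noncomputable def scaledTerm (k n : ℕ) : ℝ :=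
  (k + 1)! * (rising (1/2) (n + 1) ^ 2 / ((n + 2)! * (k + n + 2)!))

lemma scaledTerm_pos (k n : ℕ) : 0 < scaledTerm k n := by
  have := rising_pos (x := 1/2) (by norm_num) (n + 1)
  unfold scaledTerm
  positivity

lemma scaledTerm_zero_right (k : ℕ) : scaledTerm k 0 = 1 / (8 * (k + 2)) := by
  simp only [scaledTerm, rising, zero_add, factorial_succ (k + 1)]
  push_cast
  field_simp
  ring

lemma scaledTerm_succ_right (k n : ℕ) :
    scaledTerm k (n + 1) = (n + 3/2) ^ 2 / ((n + 3) * (k + n + 3)) * scaledTerm k n := by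
  simp only [scaledTerm, rising_succ (1/2) (n + 1), show k + (n + 1) + 2 = k + n + 2 + 1 by omega,
    factorial_succ (n + 2), factorial_succ (k + n + 2)]
  push_cast
  field_simp
  ring

lemma scaledTerm_succ_left (k n : ℕ) :
    scaledTerm (k + 1) n = (k + 2) / (k + n + 3) * scaledTerm k n := by
  simp only [scaledTerm, show k + 1 + n + 2 = k + n + 2 + 1 by omega,
    factorial_succ (k + 1), factorial_succ (k + n + 2)]
  push_cast
  field_simp
  ring

lemma sq_mul_scaledTerm_zero_left (n : ℕ) :
    (n + 2) ^ 2 * scaledTerm 0 n = (rising (1/2) (n + 1) / (n + 1)!) ^ 2 := by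
  simp only [scaledTerm, zero_add, factorial_succ (n + 1)]
  push_cast
  field_simp
  ring

lemma mul_scaledTerm_le (k n : ℕ) :
    (n + 2) * scaledTerm k n ≤ (rising (1/2) (n + 1) / (n + 1)!) ^ 2 := by
  have hfact : (k + 1)! * (n + 1)! ≤ (k + n + 2)! :=
    Nat.le_of_dvd (by positivity) ((show k + 1 + (n + 1) = k + n + 2 by omega) ▸
      factorial_mul_factorial_dvd_factorial_add (k + 1) (n + 1))
  have hfact' : ((k + 1)! : ℝ) * (n + 1)! ≤ (k + n + 2)! := by exact_mod_cast hfact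
  have hsplit : (n + 2) * scaledTerm k n =
      (rising (1/2) (n + 1) / (n + 1)!) ^ 2 * ((k + 1)! * (n + 1)! / (k + n + 2)!) := by
    simp only [scaledTerm, factorial_succ (n + 1)]
    push_cast
    field_simp
    ring
  rw [hsplit]
  exact mul_le_of_le_one_right (by positivity) ((div_le_one (by positivity)).2 hfact')

lemma hasSum_scaledTerm_zero : HasSum (scaledTerm 0) (16 / π - 5) := by
  set g : ℕ → ℝ := fun n =>
    -4 * ((4 * (n + 1 : ℕ) + 1) * (rising (1/2) (n + 1) / (n + 1)!) ^ 2)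
  have hg : Tendsto g atTop (𝓝 (-16 / π)) := by
    have := ((tendsto_affine_mul_sq_rising_half_div_factorial 4 1).comp
      (tendsto_add_atTop_nat 1)).const_mul (-4)
    rwa [show -16 / π = -4 * (4 / π) by ring]
  have hdiff : ∀ n, g n - g (n + 1) = scaledTerm 0 n := by
    intro n
    simp only [g, ← sq_mul_scaledTerm_zero_left, scaledTerm_succ_right]
    push_cast
    field_simp
    ring
  have hg0 : g 0 = -5 := by
    simp only [g, ← sq_mul_scaledTerm_zero_left, scaledTerm_zero_right]
    norm_num
  have := hasSum_sub_succ_of_nonneg hg fun n => hdiff n ▸ (scaledTerm_pos 0 n).le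
  rwa [funext hdiff, hg0, show (-5 : ℝ) - -16 / π = 16 / π - 5 by ring] at this

lemma hasSum_scaledTerm_recurrence (k : ℕ) :
    HasSum (fun n =>
      4 * ((k : ℝ) + 2) ^ 2 * scaledTerm k n - (2 * k + 3) ^ 2 * scaledTerm (k + 1) n) 1 := by
  set g : ℕ → ℝ := fun n => 4 * (k + 2) * ((n + 2) * scaledTerm k n)
  have hg : Tendsto g atTop (𝓝 0) := by
    have hx := (tendsto_affine_mul_sq_rising_half_div_factorial 0 1).comp (tendsto_add_atTop_nat 1)
    simp only [zero_mul, zero_add, one_mul, zero_div] at hx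
    have := squeeze_zero (fun n => by positivity [scaledTerm_pos k n]) (mul_scaledTerm_le k) hx
    simpa only [mul_zero] using this.const_mul (4 * ((k : ℝ) + 2))
  have hdiff : ∀ n, g n - g (n + 1) =
      4 * ((k : ℝ) + 2) ^ 2 * scaledTerm k n - (2 * k + 3) ^ 2 * scaledTerm (k + 1) n := by
    intro n
    simp only [g, scaledTerm_succ_right, scaledTerm_succ_left]
    push_cast
    field_simp
    ring
  have hnonneg : ∀ n, 0 ≤ g n - g (n + 1) := by
    intro n
    have hle : scaledTerm (k + 1) n ≤ scaledTerm k n := by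
      rw [scaledTerm_succ_left]
      exact mul_le_of_le_one_left (scaledTerm_pos k n).le
        ((div_le_one (by positivity)).2 (by linarith))
    rw [hdiff, sub_nonneg]
    have hcoeff : (2 * (k : ℝ) + 3) ^ 2 ≤ 4 * ((k : ℝ) + 2) ^ 2 := by
      nlinarith [k.cast_nonneg (α := ℝ)]
    exact mul_le_mul hcoeff hle (scaledTerm_pos _ _).le (by positivity)
  have hg0 : g 0 = 1 := by
    simp only [g, scaledTerm_zero_right]
    field_simp
    norm_num
  simpa [funext hdiff, hg0] using hasSum_sub_succ_of_nonneg hg hnonneg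

noncomputable def seriesValue (k : ℕ) : ℝ :=
  4 * ((k + 1)! : ℝ) ^ 2 / (π * rising (1/2) (k + 1) ^ 2) - (4 * k + 5)

lemma seriesValue_zero : seriesValue 0 = 16 / π - 5 := by
  norm_num [seriesValue, rising]
  ring

lemma seriesValue_succ (k : ℕ) :
    (2 * (k : ℝ) + 3) ^ 2 * seriesValue (k + 1) =
      4 * ((k : ℝ) + 2) ^ 2 * seriesValue k - 1 := by
  have := rising_pos (x := 1/2) (by norm_num) (k + 1)
  simp only [seriesValue, rising_succ (1/2) (k + 1), factorial_succ (k + 1)]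
  push_cast
  field_simp
  ring

lemma hasSum_scaledTerm (k : ℕ) : HasSum (scaledTerm k) (seriesValue k) := by
  induction k with
  | zero => simpa [seriesValue_zero] using hasSum_scaledTerm_zero
  | succ k ih =>
    have hc : (2 * (k : ℝ) + 3) ^ 2 ≠ 0 := by positivity
    have := ((ih.mul_left (4 * ((k : ℝ) + 2) ^ 2)).sub (hasSum_scaledTerm_recurrence k)).div_const
      ((2 * (k : ℝ) + 3) ^ 2)
    simpa only [← seriesValue_succ, sub_sub_cancel, mul_div_cancel_left₀ _ hc] using this

theorem stmt5 (k : ℕ) :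
    4 * ((k + 1).factorial : ℝ) ^ 2 / (π * (rising (1/2) (k + 1)) ^ 2) =
    4 * k + 5 + ((k + 1).factorial : ℝ) *
      ∑' n : ℕ, (rising (1/2) (n + 1)) ^ 2 /
        ((n + 2).factorial * (k + n + 2).factorial) := by
  have h := (hasSum_scaledTerm k).tsum_eq
  unfold scaledTerm at h
  rw [tsum_mul_left, seriesValue] at h
  rw [h]
  ring
end

section
/- 2048/(3π) = 217 + 36∑_{n=1}^∞ ((1/2)_n)^2/((n+2)!)^2. -/
open Real

open Filter Finset in
private noncomputable def cc (n : ℕ) : ℝ :=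
  (∏ i ∈ Finset.range n, ((2 * (i : ℝ) + 1) / (2 * (i : ℝ) + 2))) ^ 2

open Filter Finset in
private noncomputable def TT (n : ℕ) : ℝ :=
  (624 + 3760 * (n : ℝ) + 7900 * (n : ℝ) ^ 2 + 7440 * (n : ℝ) ^ 3
    + 3200 * (n : ℝ) ^ 4 + 512 * (n : ℝ) ^ 5) / (27 * (((n : ℝ) + 1) * ((n : ℝ) + 2)) ^ 2)

private lemma cc_succ (n : ℕ) :
    cc (n + 1) = cc n * ((2 * (n : ℝ) + 1) / (2 * (n : ℝ) + 2)) ^ 2 := by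
  unfold cc
  rw [Finset.prod_range_succ, mul_pow]

private lemma cc_pos (n : ℕ) : 0 < cc n := by
  unfold cc
  positivity

private lemma cc_zero : cc 0 = 1 := by simp [cc]

/-- telescoping identity -/
private lemma tele (N : ℕ) :
    ∑ n ∈ Finset.range N, cc n / (((n : ℝ) + 1) * ((n : ℝ) + 2)) ^ 2
      = cc N * TT N - TT 0 := by
  induction N with
  | zero => simp [cc_zero]
  | succ N ih =>
    rw [Finset.sum_range_succ, ih, cc_succ]
    have h : cc (N + 1) * TT (N + 1) - cc N * TT N
        = cc N / (((N : ℝ) + 1) * ((N : ℝ) + 2)) ^ 2 := by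
      rw [cc_succ]
      have h1 : ((N : ℝ) + 1) ≠ 0 := by positivity
      have h2 : ((N : ℝ) + 2) ≠ 0 := by positivity
      have h3 : (2 * (N : ℝ) + 2) ≠ 0 := by positivity
      have h4 : ((N : ℝ) + 3) ≠ 0 := by positivity
      unfold TT
      push_cast
      field_simp
      ring
    rw [cc_succ] at h
    linarith [h]

open Real.Wallis in
private lemma cc_mul_W (n : ℕ) : cc n * (2 * (n : ℝ) + 1) * W n = 1 := by
  induction n with
  | zero => simp [cc_zero, W]
  | succ n ih =>
    have h1 : (2 * (n : ℝ) + 1) ≠ 0 := by positivity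
    have h2 : (2 * (n : ℝ) + 2) ≠ 0 := by positivity
    have h3 : (2 * (n : ℝ) + 3) ≠ 0 := by positivity
    have expand : cc (n + 1) * (2 * ((n : ℝ) + 1) + 1) * W (n + 1)
        = cc n * (2 * (n : ℝ) + 1) * W n := by
      rw [cc_succ, W_succ]
      field_simp
      ring
    push_cast
    linear_combination expand + ih

open Filter in
private lemma cc_tendsto : Tendsto (fun n : ℕ => cc n * (2 * (n : ℝ) + 1))
    atTop (nhds (2 / π)) := by
  have h1 : ∀ n : ℕ, cc n * (2 * (n : ℝ) + 1) = (Real.Wallis.W n)⁻¹ := by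
    intro n
    have := cc_mul_W n
    have hW := Real.Wallis.W_pos n
    field_simp
    linarith [this]
  have h2 : Tendsto (fun n : ℕ => (Real.Wallis.W n)⁻¹) atTop (nhds ((π / 2)⁻¹)) :=
    Real.Wallis.tendsto_W_nhds_pi_div_two.inv₀ (by positivity)
  have : (π / 2)⁻¹ = 2 / π := by
    rw [inv_div]
  rw [this] at h2
  exact h2.congr fun n => (h1 n).symm

open Filter in
private lemma TT_tendsto : Tendsto (fun n : ℕ => TT n / (2 * (n : ℝ) + 1))
    atTop (nhds (256 / 27)) := by
  have hcont : ContinuousAt (fun x : ℝ =>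
      (624 * x ^ 5 + 3760 * x ^ 4 + 7900 * x ^ 3 + 7440 * x ^ 2 + 3200 * x + 512)
        / (27 * (2 + x) * ((1 + x) * (1 + 2 * x)) ^ 2)) 0 := by
    apply ContinuousAt.div (by fun_prop) (by fun_prop)
    norm_num
  have hlim := hcont.tendsto.comp tendsto_one_div_atTop_nhds_zero_nat
  norm_num at hlim
  refine hlim.congr' ?_
  filter_upwards [eventually_ge_atTop 1] with n hn
  have hn0 : ((n : ℝ)) ≠ 0 := by
    have : (1 : ℝ) ≤ (n : ℝ) := by exact_mod_cast hn
    linarith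
  have h1 : ((n : ℝ) + 1) ≠ 0 := by positivity
  have h2 : ((n : ℝ) + 2) ≠ 0 := by positivity
  have h3 : (2 * (n : ℝ) + 1) ≠ 0 := by positivity
  simp only [Function.comp_apply]
  unfold TT
  field_simp

open Filter in
private lemma ccTT_tendsto : Tendsto (fun n : ℕ => cc n * TT n)
    atTop (nhds (512 / (27 * π))) := by
  have h := cc_tendsto.mul TT_tendsto
  have hval : (2 / π) * (256 / 27) = 512 / (27 * π) := by
    ring
  rw [hval] at h
  refine h.congr fun n => ?_
  have h3 : (2 * (n : ℝ) + 1) ≠ 0 := by positivity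
  field_simp

private lemma rising_sq (m : ℕ) :
    (rising (1/2) m) ^ 2 = cc m * ((m.factorial : ℝ)) ^ 2 := by
  induction m with
  | zero => simp [rising, cc_zero]
  | succ m ih =>
    unfold rising at ih ⊢
    rw [Finset.prod_range_succ, mul_pow, ih, cc_succ, Nat.factorial_succ]
    have h2 : (2 * (m : ℝ) + 2) ≠ 0 := by positivity
    push_cast
    field_simp
    ring

private lemma summand_eq (n : ℕ) :
    (rising (1/2) (n + 1)) ^ 2 / ((n + 3).factorial : ℝ) ^ 2
      = cc (n + 1) / (((n : ℝ) + 2) * ((n : ℝ) + 3)) ^ 2 := by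
  have hfac : ((n + 3).factorial : ℝ)
      = ((n : ℝ) + 3) * (((n : ℝ) + 2) * ((n + 1).factorial : ℝ)) := by
    have : (n + 3).factorial = (n + 3) * ((n + 2) * (n + 1).factorial) := by
      rw [show n + 3 = (n + 2) + 1 from rfl, Nat.factorial_succ,
        show n + 2 = (n + 1) + 1 from rfl, Nat.factorial_succ]
    rw [this]
    push_cast
    ring
  rw [rising_sq, hfac]
  have h1 : ((n + 1).factorial : ℝ) ≠ 0 := by
    exact_mod_cast Nat.factorial_ne_zero (n + 1)
  have h2 : ((n : ℝ) + 2) ≠ 0 := by positivity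
  have h3 : ((n : ℝ) + 3) ≠ 0 := by positivity
  field_simp

private lemma partial_sum (N : ℕ) :
    ∑ n ∈ Finset.range N, cc (n + 1) / (((n : ℝ) + 2) * ((n : ℝ) + 3)) ^ 2
      = cc (N + 1) * TT (N + 1) - TT 0 - 1/4 := by
  have h := tele (N + 1)
  rw [Finset.sum_range_succ'] at h
  have h0 : cc 0 / (((0 : ℕ) : ℝ) + 1) ^ 2 / 1 = 1 := by
    simp [cc_zero]
  have heq : ∀ n : ℕ, cc (n + 1) / ((((n + 1 : ℕ) : ℝ) + 1) * (((n + 1 : ℕ) : ℝ) + 2)) ^ 2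
      = cc (n + 1) / (((n : ℝ) + 2) * ((n : ℝ) + 3)) ^ 2 := by
    intro n; push_cast; ring_nf
  rw [Finset.sum_congr rfl (fun n _ => heq n)] at h
  have hc0 : cc 0 / ((((0 : ℕ) : ℝ) + 1) * (((0 : ℕ) : ℝ) + 2)) ^ 2 = 1/4 := by
    simp [cc_zero]; norm_num
  rw [hc0] at h
  linarith [h]

open Filter in
private lemma the_hasSum :
    HasSum (fun n : ℕ => (rising (1/2) (n + 1)) ^ 2 / ((n + 3).factorial : ℝ) ^ 2)
      (512 / (27 * π) - 217 / 36) := by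
  have hnonneg : ∀ n : ℕ,
      0 ≤ (rising (1/2) (n + 1)) ^ 2 / ((n + 3).factorial : ℝ) ^ 2 := by
    intro n; positivity
  rw [hasSum_iff_tendsto_nat_of_nonneg hnonneg]
  have hps : ∀ N : ℕ, ∑ n ∈ Finset.range N,
      (rising (1/2) (n + 1)) ^ 2 / ((n + 3).factorial : ℝ) ^ 2
        = cc (N + 1) * TT (N + 1) - TT 0 - 1/4 := by
    intro N
    rw [Finset.sum_congr rfl (fun n _ => summand_eq n)]
    exact partial_sum N
  have hT0 : TT 0 = 52 / 9 := by
    unfold TT; norm_num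
  have hlim : Tendsto (fun N : ℕ => cc (N + 1) * TT (N + 1) - TT 0 - 1/4)
      atTop (nhds (512 / (27 * π) - 217 / 36)) := by
    have h1 : Tendsto (fun N : ℕ => cc (N + 1) * TT (N + 1)) atTop
        (nhds (512 / (27 * π))) := ccTT_tendsto.comp (tendsto_add_atTop_nat 1)
    have h2 := (h1.sub_const (TT 0)).sub_const (1/4)
    have : 512 / (27 * π) - TT 0 - 1/4 = 512 / (27 * π) - 217 / 36 := by
      rw [hT0]; ring
    rwa [this] at h2
  exact hlim.congr fun N => (hps N).symm

theorem stmt9 :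
    2048 / (3 * π) = 217 + 36 * ∑' n : ℕ,
      (rising (1/2) (n + 1)) ^ 2 / ((n + 3).factorial : ℝ) ^ 2 := by
  rw [the_hasSum.tsum_eq]
  have hπ : π ≠ 0 := Real.pi_ne_zero
  field_simp
  ring
end
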